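/- arXiv:2404.18592 — 3 statements merged into one kernel-verified Lean document; each statement's English description precedes it below -/
import Mathlib

section
/- Let 𝒜 be a semiring of subsets of Ω and let μ : 𝒜 → [0,1] be additive. If every countable cover of a set in 𝒜 by sets in 𝒜 admits a finite subcover, then μ is σ-subadditive on 𝒜. -/
open MeasureTheory ENNReal Set Finset

section helpers

variable {Ω : Type*} {𝒜 : Set (Set Ω)}

/-- Sum of measures of intersections with a fixed set is at most the measure of that set. -/
theorem my_sum_inter_le (hS : IsSetSemiring 𝒜) (m : AddContent ℝ≥0∞ 𝒜)
    {t : Set Ω} (ht : t ∈ 𝒜) (J : Finset (Set Ω)) (hJ : ↑J ⊆ 𝒜)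
    (hdis : Set.PairwiseDisjoint (J : Set (Set Ω)) id) :
    ∑ s ∈ J, m (s ∩ t) ≤ m t := by
  classical
  set J₁ : Finset (Set Ω) := J.filter (fun s => s ∩ t ≠ ∅) with hJ₁
  have h1 : ∑ s ∈ J, m (s ∩ t) = ∑ s ∈ J₁, m (s ∩ t) := by
    refine (Finset.sum_subset (Finset.filter_subset _ _) ?_).symm
    intro s hs hns
    simp only [hJ₁, Finset.mem_filter, hs, true_and, not_not] at hns
    rw [hns, addContent_empty]
  have hinj : ∀ s ∈ J₁, ∀ s' ∈ J₁, s ∩ t = s' ∩ t → s = s' := by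
    intro s hs s' hs' heq
    by_contra hne
    have hds : Disjoint s s' := hdis (Finset.mem_coe.mpr (Finset.filter_subset _ _ hs))
      (Finset.mem_coe.mpr (Finset.filter_subset _ _ hs')) hne
    have : s ∩ t = ∅ := by
      have : s ∩ t ⊆ s ∩ s' := by
        intro x hx
        exact ⟨hx.1, (heq ▸ hx).1⟩
      have h0 : s ∩ s' = ∅ := Set.disjoint_iff_inter_eq_empty.mp hds
      exact Set.subset_empty_iff.mp (h0 ▸ this)
    exact (Finset.mem_filter.mp hs).2 this
  have h2 : ∑ s ∈ J₁, m (s ∩ t) = ∑ u ∈ J₁.image (· ∩ t), m u :=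
    (Finset.sum_image hinj).symm
  rw [h1, h2]
  refine sum_addContent_le_of_subset hS ?_ ?_ ht ?_
  · intro u hu
    simp only [Finset.coe_image, Set.mem_image, Finset.mem_coe] at hu
    obtain ⟨s, hs, rfl⟩ := hu
    exact hS.inter_mem s (hJ (Finset.filter_subset _ _ hs)) t ht
  · intro u hu v hv huv
    simp only [Finset.coe_image, Set.mem_image, Finset.mem_coe] at hu hv
    obtain ⟨s, hs, rfl⟩ := hu
    obtain ⟨s', hs', rfl⟩ := hv
    have hne : s ≠ s' := fun h => huv (by rw [h])
    have hds : Disjoint s s' := hdis (Finset.mem_coe.mpr (Finset.filter_subset _ _ hs))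
      (Finset.mem_coe.mpr (Finset.filter_subset _ _ hs')) hne
    exact Disjoint.mono Set.inter_subset_left Set.inter_subset_left hds
  · intro u hu
    simp only [Finset.mem_image] at hu
    obtain ⟨s, _, rfl⟩ := hu
    exact Set.inter_subset_right

/-- Key finite-subadditivity lemma for additive contents on semirings. -/
theorem semiring_key (hS : IsSetSemiring 𝒜)
    (m : AddContent ℝ≥0∞ 𝒜) (f : ℕ → Set Ω) (hf : ∀ k, f k ∈ 𝒜) :
    ∀ (n : ℕ) (J : Finset (Set Ω)), ↑J ⊆ 𝒜 →
      Set.PairwiseDisjoint (J : Set (Set Ω)) id →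
      (∀ s ∈ J, s ⊆ ⋃ k ∈ Finset.range n, f k) →
      ∑ s ∈ J, m s ≤ ∑ k ∈ Finset.range n, m (f k) := by
  intro n
  induction n with
  | zero =>
    intro J hJ _ hsub
    simp only [Finset.range_zero, Finset.notMem_empty, Set.iUnion_of_empty,
      Set.iUnion_false, Set.iUnion_empty, Set.subset_empty_iff] at hsub
    have : ∀ s ∈ J, m s = 0 := fun s hs => by
      rw [hsub s hs]; exact addContent_empty
    rw [Finset.sum_congr rfl this]
    simp
  | succ n ih =>
    intro J hJ hdis hsub
    classical
    have hsmem : ∀ s ∈ J, s ∈ 𝒜 := fun s hs => hJ hs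
    have hIsub : ∀ s, s ∈ 𝒜 → (↑({s ∩ f n} : Finset (Set Ω)) : Set (Set Ω)) ⊆ 𝒜 := by
      intro s hs
      simp only [Finset.coe_singleton, Set.singleton_subset_iff]
      exact hS.inter_mem s hs (f n) (hf n)
    set D : Set Ω → Finset (Set Ω) :=
      fun s => if hs : s ∈ 𝒜 then hS.disjointOfDiffUnion hs (hIsub s hs) else ∅ with hDdef
    -- properties of D for s ∈ 𝒜
    have hDeq : ∀ s (hs : s ∈ 𝒜), D s = hS.disjointOfDiffUnion hs (hIsub s hs) := by
      intro s hs; simp only [hDdef, dif_pos hs]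
    have hDsub : ∀ s (hs : s ∈ 𝒜), (↑(D s) : Set (Set Ω)) ⊆ 𝒜 := by
      intro s hs; rw [hDeq s hs]; exact hS.disjointOfDiffUnion_subset hs (hIsub s hs)
    have hDunion : ∀ s (hs : s ∈ 𝒜), ⋃₀ ↑(D s) = s \ f n := by
      intro s hs
      rw [hDeq s hs, ← hS.sdiff_sUnion_eq_sUnion_disjointOfDiffUnion hs (hIsub s hs)]
      simp
    have hDsubset : ∀ s (hs : s ∈ 𝒜), ∀ u ∈ D s, u ⊆ s \ f n := by
      intro s hs u hu
      rw [← hDunion s hs]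
      exact Set.subset_sUnion_of_mem hu
    have hDne : ∀ s (hs : s ∈ 𝒜), ∅ ∉ D s := by
      intro s hs; rw [hDeq s hs]; exact hS.empty_notMem_disjointOfDiffUnion hs (hIsub s hs)
    have hDdis : ∀ s (hs : s ∈ 𝒜),
        Set.PairwiseDisjoint (↑(D s) : Set (Set Ω)) id := by
      intro s hs; rw [hDeq s hs]; exact hS.pairwiseDisjoint_disjointOfDiffUnion hs (hIsub s hs)
    have hdecomp : ∀ s (hs : s ∈ 𝒜), m s = m (s ∩ f n) + ∑ u ∈ D s, m u := by
      intro s hs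
      rw [hDeq s hs]
      have := addContent_eq_add_disjointOfDiffUnion_of_subset (m := m) hS hs
        (hIsub s hs) (by simp) (by simp)
      simpa using this
    -- split the sum
    have hsplit : ∑ s ∈ J, m s
        = ∑ s ∈ J, m (s ∩ f n) + ∑ s ∈ J, ∑ u ∈ D s, m u := by
      rw [← Finset.sum_add_distrib]
      exact Finset.sum_congr rfl fun s hs => hdecomp s (hsmem s hs)
    rw [hsplit, Finset.sum_range_succ]
    rw [add_comm (∑ k ∈ Finset.range n, m (f k)) (m (f n))]
    refine add_le_add ?_ ?_
    · exact my_sum_inter_le hS m (hf n) J hJ hdis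
    · -- the biUnion of the D s
      set J' : Finset (Set Ω) := J.biUnion D with hJ'
      -- distinct s ∈ J give disjoint finsets D s
      have hDfindis : ∀ s ∈ (J : Set (Set Ω)), ∀ s' ∈ (J : Set (Set Ω)), s ≠ s' →
          ∀ u ∈ D s, u ∉ D s' := by
        intro s hs s' hs' hne u hu hu'
        have h1 := hDsubset s (hsmem s hs) u hu
        have h2 := hDsubset s' (hsmem s' hs') u hu'
        have hds : Disjoint s s' := hdis hs hs' hne
        have : u = ∅ := by
          have : u ⊆ s ∩ s' := Set.subset_inter (h1.trans Set.diff_subset)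
            (h2.trans Set.diff_subset)
          rw [Set.disjoint_iff_inter_eq_empty.mp hds] at this
          exact Set.subset_empty_iff.mp this
        exact hDne s (hsmem s hs) (this ▸ hu)
      have hsum' : ∑ s ∈ J, ∑ u ∈ D s, m u = ∑ u ∈ J', m u := by
        rw [hJ']
        refine (Finset.sum_biUnion ?_).symm
        intro s hs s' hs' hne
        simp only [Function.onFun]
        rw [Finset.disjoint_left]
        exact fun u hu => hDfindis s hs s' hs' hne u hu
      rw [hsum']
      refine ih J' ?_ ?_ ?_
      · intro u hu
        simp only [hJ', Finset.coe_biUnion, Set.mem_iUnion, Finset.mem_coe] at hu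
        obtain ⟨s, hs, hu⟩ := hu
        exact hDsub s (hsmem s hs) hu
      · intro u hu v hv huv
        simp only [hJ', Finset.coe_biUnion, Set.mem_iUnion, Finset.mem_coe] at hu hv
        obtain ⟨s, hs, hu⟩ := hu
        obtain ⟨s', hs', hv⟩ := hv
        by_cases hss : s = s'
        · subst hss
          exact hDdis s (hsmem s hs) (Finset.mem_coe.mpr hu) (Finset.mem_coe.mpr hv) huv
        · have h1 := hDsubset s (hsmem s hs) u hu
          have h2 := hDsubset s' (hsmem s' hs') v hv
          exact Disjoint.mono (h1.trans Set.diff_subset) (h2.trans Set.diff_subset)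
            (hdis hs hs' hss)
      · intro u hu
        simp only [hJ', Finset.mem_biUnion] at hu
        obtain ⟨s, hs, hu⟩ := hu
        intro x hx
        have hxs := hDsubset s (hsmem s hs) u hu hx
        have := hsub s hs hxs.1
        simp only [Set.mem_iUnion, Finset.mem_range, exists_prop] at this ⊢
        obtain ⟨k, hk, hxk⟩ := this
        refine ⟨k, ?_, hxk⟩
        rcases Nat.lt_succ_iff_lt_or_eq.mp hk with h | h
        · exact h
        · exact absurd (h ▸ hxk) hxs.2

end helpers

/-- if every countable cover of a set in a semiring by sets in
the semiring admits a finite subcover, then any additive [0,1]-valued set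
function on the semiring is σ-subadditive. -/
theorem stmt_11 {Ω : Type*} (𝒜 : Set (Set Ω)) (hS : IsSetSemiring 𝒜)
    (μ : Set Ω → ℝ≥0∞) (hle : ∀ X ∈ 𝒜, μ X ≤ 1)
    (hadd : ∀ X ∈ 𝒜, ∀ (K : ℕ) (f : Fin K → Set Ω), (∀ i, f i ∈ 𝒜) →
      Pairwise (Function.onFun Disjoint f) → X = ⋃ i, f i → μ X = ∑ i, μ (f i))
    (hfin : ∀ X ∈ 𝒜, ∀ f : ℕ → Set Ω, (∀ k, f k ∈ 𝒜) → X ⊆ ⋃ k, f k →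
      ∃ K : ℕ, X ⊆ ⋃ k ≤ K, f k) :
    ∀ X ∈ 𝒜, ∀ f : ℕ → Set Ω, (∀ k, f k ∈ 𝒜) → X ⊆ ⋃ k, f k →
      μ X ≤ ∑' k, μ (f k) := by
  classical
  -- build an AddContent from μ
  have hempty : μ ∅ = 0 := by
    have := hadd ∅ hS.empty_mem 0 (fun i => i.elim0) (fun i => i.elim0)
      (fun i => i.elim0) (by simp)
    simpa using this
  let m : AddContent ℝ≥0∞ 𝒜 :=
    { toFun := μ
      empty' := hempty
      sUnion' := by
        intro I h_ss h_dis h_mem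
        set K := I.card with hK
        let e : I ≃ Fin K := I.equivFin
        let g : Fin K → Set Ω := fun i => (e.symm i : Set Ω)
        have hg : ∀ i, g i ∈ 𝒜 := fun i => h_ss (e.symm i).2
        have hgdis : Pairwise (Function.onFun Disjoint g) := by
          intro i j hij
          have hne : ((e.symm i : Set Ω)) ≠ ((e.symm j : Set Ω)) := by
            intro h
            exact hij (by
              have : e.symm i = e.symm j := Subtype.ext h
              simpa using congrArg e this)
          exact h_dis (Finset.mem_coe.mpr (e.symm i).2) (Finset.mem_coe.mpr (e.symm j).2) hne
        have hU : ⋃₀ ↑I = ⋃ i, g i := by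
          ext x
          simp only [Set.mem_sUnion, Finset.mem_coe, Set.mem_iUnion]
          constructor
          · rintro ⟨t, ht, hx⟩
            exact ⟨e ⟨t, ht⟩, by simpa [g] using hx⟩
          · rintro ⟨i, hx⟩
            exact ⟨_, (e.symm i).2, hx⟩
        have h := hadd (⋃₀ ↑I) h_mem K g hg hgdis hU
        rw [h, ← Finset.sum_coe_sort I (fun s => μ s),
          ← Equiv.sum_comp e.symm (fun s : I => μ (s : Set Ω))] }
  intro X hX f hf hcov
  obtain ⟨K, hK⟩ := hfin X hX f hf hcov
  have hK' : X ⊆ ⋃ k ∈ Finset.range (K + 1), f k := by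
    refine hK.trans ?_
    intro x hx
    simp only [Set.mem_iUnion, Finset.mem_range, exists_prop] at hx ⊢
    obtain ⟨k, hk, hxk⟩ := hx
    exact ⟨k, Nat.lt_succ_of_le hk, hxk⟩
  have hkey := semiring_key hS m f hf (K + 1) {X} (by simpa using hX)
    (by simp) (by simpa using hK')
  simp only [Finset.sum_singleton] at hkey
  calc μ X = m X := rfl
    _ ≤ ∑ k ∈ Finset.range (K + 1), m (f k) := hkey
    _ ≤ ∑' k, μ (f k) := ENNReal.sum_le_tsum _
end

section
/- Let (A, →) be a rooted tree on a countable vertex set with every vertex having finitely many children, and let μ be a function assigning a value in [0,1] to each vertex such that μ(root) = 1 and for every vertex a with at least one child, μ(a) = Σ_{b : a → b} μ(b). Then for any two finite antichains X and Y of vertices (sets of pairwise incomparable vertices in the ancestor order) that 'cover the same paths' — meaning the disjoint union of the sets {P ∈ ω(A) : x ∈ P} over x ∈ X equals the disjoint union over y ∈ Y — we have Σ_{x∈X} μ(x) = Σ_{y∈Y} μ(y). -/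
/-- A rooted tree: a directed tree with a distinguished root from which
every vertex is reachable. -/
structure QTree (V : Type*) where
  step : V → V → Prop
  root : V
  reach : ∀ v, Relation.ReflTransGen step root v
  parent_unique : ∀ {a b c : V}, step a c → step b c → a = b
  not_step_root : ∀ v, ¬ step v root
  acyclic : ∀ v, ¬ Relation.TransGen step v v

variable {V : Type*}

/-- A rooted path: contains the root, is a chain for the ancestor order,
and is downward closed under ancestors. -/
def IsRootedPath (T : QTree V) (P : Set V) : Prop :=
  T.root ∈ P ∧
  (∀ a ∈ P, ∀ b ∈ P, Relation.ReflTransGen T.step a b ∨ Relation.ReflTransGen T.step b a) ∧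
  (∀ a b : V, Relation.ReflTransGen T.step a b → b ∈ P → a ∈ P)

/-- A maximal rooted path. -/
def IsMaxPath (T : QTree V) (P : Set V) : Prop :=
  IsRootedPath T P ∧ ∀ Q : Set V, IsRootedPath T Q → P ⊆ Q → P = Q

/-- The set ω(A) of maximal rooted paths, as a type. -/
def MaxPath (T : QTree V) := {P : Set V // IsMaxPath T P}

namespace QTree

lemma acc_step (T : QTree V) (v : V) : Acc T.step v := by
  have h := T.reach v
  induction h with
  | refl => exact ⟨_, fun y hy => absurd hy (T.not_step_root y)⟩
  | tail _ hbc ih => exact ⟨_, fun y hy => by rw [T.parent_unique hy hbc]; exact ih⟩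

open Classical in
noncomputable def depth (T : QTree V) : V → ℕ :=
  WellFounded.fix ⟨T.acc_step⟩
    (fun v ih => if h : ∃ p, T.step p v then ih h.choose h.choose_spec + 1 else 0)

lemma depth_step (T : QTree V) {a b : V} (h : T.step a b) : T.depth b = T.depth a + 1 := by
  have he : ∃ p, T.step p b := ⟨a, h⟩
  have key : T.depth b = T.depth he.choose + 1 := by
    classical
    rw [depth, WellFounded.fix_eq]
    simp only [he, dif_pos]
  rw [key, T.parent_unique he.choose_spec h]

lemma exists_parent (T : QTree V) {v : V} (hv : v ≠ T.root) : ∃ p, T.step p v := by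
  rcases (T.reach v).cases_tail with h | ⟨m, _, hm⟩
  · exact absurd h hv
  · exact ⟨m, hm⟩

lemma root_of_depth_eq_zero (T : QTree V) {v : V} (h : T.depth v = 0) : v = T.root := by
  by_contra hv
  obtain ⟨p, hp⟩ := T.exists_parent hv
  rw [T.depth_step hp] at h
  simp at h

lemma depth_le (T : QTree V) {a b : V} (h : Relation.ReflTransGen T.step a b) :
    T.depth a ≤ T.depth b := by
  induction h with
  | refl => exact le_refl _
  | tail _ hst ih => rw [T.depth_step hst]; omega

lemma eq_of_rtg_of_depth_le (T : QTree V) {a b : V} (h : Relation.ReflTransGen T.step a b)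
    (hd : T.depth b ≤ T.depth a) : a = b := by
  rcases h.cases_head with rfl | ⟨c, hac, hcb⟩
  · rfl
  · have h1 : T.depth c ≤ T.depth b := T.depth_le hcb
    rw [T.depth_step hac] at h1
    omega

lemma rtg_antisymm (T : QTree V) {a b : V} (hab : Relation.ReflTransGen T.step a b)
    (hba : Relation.ReflTransGen T.step b a) : a = b :=
  T.eq_of_rtg_of_depth_le hab (T.depth_le hba)

lemma ne_of_step_rtg (T : QTree V) {p m : V} (hpm : T.step p m) : p ≠ m := by
  intro h
  exact T.acyclic m (Relation.TransGen.single (h ▸ hpm))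

/-- ancestors of a common vertex are comparable -/
lemma comp (T : QTree V) {a b c : V} (hbc : Relation.ReflTransGen T.step b c)
    (hac : Relation.ReflTransGen T.step a c) :
    Relation.ReflTransGen T.step a b ∨ Relation.ReflTransGen T.step b a := by
  induction hbc generalizing a with
  | refl => exact Or.inl hac
  | @tail m c' hbm hmc ih =>
    rcases hac.cases_tail with rfl | ⟨m', ham', hm'c⟩
    · exact Or.inr (hbm.tail hmc)
    · rw [T.parent_unique hm'c hmc] at ham'
      exact ih ham'

lemma ancestors_rootedPath (T : QTree V) (v : V) :
    IsRootedPath T {a | Relation.ReflTransGen T.step a v} := by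
  refine ⟨T.reach v, fun a ha b hb => T.comp hb ha, fun a b hab hb => hab.trans hb⟩

lemma exists_maxPath (T : QTree V) (v : V) : ∃ P, IsMaxPath T P ∧ v ∈ P := by
  obtain ⟨M, hsub, hM⟩ := zorn_subset_nonempty {Q : Set V | IsRootedPath T Q}
    (fun c hc hchain hne => by
      refine ⟨⋃₀ c, ⟨?_, ?_, ?_⟩, fun s hs => Set.subset_sUnion_of_mem hs⟩
      · obtain ⟨s, hs⟩ := hne
        exact ⟨s, hs, (hc hs).1⟩
      · rintro a ⟨s, hs, has⟩ b ⟨t, ht, hbt⟩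
        rcases hchain.total hs ht with h | h
        · exact (hc ht).2.1 a (h has) b hbt
        · exact (hc hs).2.1 a has b (h hbt)
      · rintro a b hab ⟨s, hs, hbs⟩
        exact ⟨s, hs, (hc hs).2.2 a b hab hbs⟩)
    {a | Relation.ReflTransGen T.step a v} (T.ancestors_rootedPath v)
  exact ⟨M, ⟨hM.prop, fun Q hQ hMQ => hM.eq_of_subset hQ hMQ⟩,
    hsub Relation.ReflTransGen.refl⟩

/-- a maximal path through a vertex with children passes through a child -/
lemma child_mem_maxPath (T : QTree V) {P : Set V} (hP : IsMaxPath T P) {p : V}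
    (hp : p ∈ P) {c0 : V} (hc0 : T.step p c0) : ∃ c, T.step p c ∧ c ∈ P := by
  by_contra hnone
  push_neg at hnone
  -- p is the maximum of P
  have hmax : ∀ q ∈ P, Relation.ReflTransGen T.step q p := by
    intro q hq
    rcases hP.1.2.1 p hp q hq with h | h
    · rcases h.cases_head with rfl | ⟨c, hpc, hcq⟩
      · exact Relation.ReflTransGen.refl
      · exact absurd (hP.1.2.2 c q hcq hq) (hnone c hpc)
    · exact h
  have hQ : IsRootedPath T (insert c0 P) := by
    refine ⟨Set.mem_insert_of_mem _ hP.1.1, ?_, ?_⟩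
    · rintro a (rfl | ha) b (rfl | hb)
      · exact Or.inl Relation.ReflTransGen.refl
      · exact Or.inr ((hmax b hb).tail hc0)
      · exact Or.inl ((hmax a ha).tail hc0)
      · exact hP.1.2.1 a ha b hb
    · rintro a b hab (rfl | hb)
      · rcases hab.cases_tail with rfl | ⟨m, ham, hmb⟩
        · exact Set.mem_insert _ _
        · rw [T.parent_unique hmb hc0] at ham
          exact Set.mem_insert_of_mem _ (hP.1.2.2 a p ham hp)
      · exact Set.mem_insert_of_mem _ (hP.1.2.2 a b hab hb)
  have := hP.2 _ hQ (Set.subset_insert _ _)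
  exact hnone c0 hc0 (this ▸ Set.mem_insert _ _)

end QTree

/-- the set of maximal paths covered by a finite set of vertices -/
def covS (T : QTree V) (Z : Finset V) : Set (Set V) :=
  ⋃ x ∈ Z, {P : Set V | IsMaxPath T P ∧ x ∈ P}

lemma mem_covS {T : QTree V} {Z : Finset V} {P : Set V} :
    P ∈ covS T Z ↔ ∃ x ∈ Z, IsMaxPath T P ∧ x ∈ P := by
  simp only [covS, Set.mem_iUnion, Set.mem_setOf_eq]
  tauto
/-- antichain predicate matching the theorem statement -/
def IsAnti (T : QTree V) (X : Finset V) : Prop :=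
  ∀ x ∈ X, ∀ y ∈ X, x ≠ y →
    ¬ Relation.ReflTransGen T.step x y ∧ ¬ Relation.ReflTransGen T.step y x

lemma QTree.depth_root (T : QTree V) : T.depth T.root = 0 := by
  classical
  rw [QTree.depth, WellFounded.fix_eq, dif_neg]
  rintro ⟨p, hp⟩
  exact T.not_step_root p hp

lemma covS_erase_subset [DecidableEq V] (T : QTree V) {X Y : Finset V} {m : V}
    (hX : IsAnti T X) (hcov : covS T X = covS T Y) (hmX : m ∈ X) (hmY : m ∈ Y) :
    covS T (X.erase m) ⊆ covS T (Y.erase m) := by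
  intro P hP
  obtain ⟨x, hx, hPmax, hxP⟩ := mem_covS.1 hP
  have hxX : x ∈ X := Finset.mem_of_mem_erase hx
  have hxm : x ≠ m := Finset.ne_of_mem_erase hx
  have hmP : m ∉ P := by
    intro hmP
    rcases hPmax.1.2.1 x hxP m hmP with h | h
    · exact (hX x hxX m hmX hxm).1 h
    · exact (hX x hxX m hmX hxm).2 h
  have hPY : P ∈ covS T Y := hcov ▸ mem_covS.2 ⟨x, hxX, hPmax, hxP⟩
  obtain ⟨y, hy, _, hyP⟩ := mem_covS.1 hPY
  exact mem_covS.2 ⟨y, Finset.mem_erase.2 ⟨fun h => hmP (by rw [← h]; exact hyP), hy⟩, hPmax, hyP⟩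

lemma key_lemma (T : QTree V)
    (hfin : ∀ a : V, {b : V | T.step a b}.Finite)
    (μ : V → ℝ)
    (hbr : ∀ a : V, (∃ b, T.step a b) → μ a = ∑ b ∈ (hfin a).toFinset, μ b) :
    ∀ n : ℕ, ∀ X Y : Finset V, IsAnti T X → IsAnti T Y →
      covS T X = covS T Y →
      (∑ x ∈ X, (T.depth x + 1)) + (∑ y ∈ Y, (T.depth y + 1)) ≤ n →
      ∑ x ∈ X, μ x = ∑ y ∈ Y, μ y := by
  intro n
  induction n using Nat.strong_induction_on with
  | _ n ih =>
  intro X Y hX hY hcov hn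
  classical
  by_cases hXe : X = ∅
  · subst hXe
    have hYe : Y = ∅ := by
      by_contra h
      obtain ⟨y, hy⟩ := Finset.nonempty_iff_ne_empty.2 h
      obtain ⟨P, hP, hyP⟩ := T.exists_maxPath y
      have : P ∈ covS T (∅ : Finset V) := hcov ▸ mem_covS.2 ⟨y, hy, hP, hyP⟩
      obtain ⟨z, hz, -⟩ := mem_covS.1 this
      simp at hz
    simp [hYe]
  have main : ∀ A B : Finset V, IsAnti T A → IsAnti T B → covS T A = covS T B →
      (∑ x ∈ A, (T.depth x + 1)) + (∑ y ∈ B, (T.depth y + 1)) ≤ n →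
      ∀ m ∈ A, (∀ v ∈ A ∪ B, T.depth v ≤ T.depth m) →
      ∑ x ∈ A, μ x = ∑ y ∈ B, μ y := by
    intro A B hA hB hAB hn' m hmA hmax
    by_cases hd : T.depth m = 0
    · -- everything is the root
      have hroot' : ∀ v ∈ A ∪ B, v = T.root := fun v hv =>
        T.root_of_depth_eq_zero (Nat.le_zero.1 (hd ▸ hmax v hv))
      have hmr : m = T.root := hroot' m (Finset.mem_union_left _ hmA)
      have hArt : A = {T.root} := Finset.eq_singleton_iff_unique_mem.2
        ⟨hmr ▸ hmA, fun x hx => hroot' x (Finset.mem_union_left _ hx)⟩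
      obtain ⟨P, hP, hmP⟩ := T.exists_maxPath m
      have hPB : P ∈ covS T B := hAB ▸ mem_covS.2 ⟨m, hmA, hP, hmP⟩
      obtain ⟨y, hy, -, -⟩ := mem_covS.1 hPB
      have hBrt : B = {T.root} := Finset.eq_singleton_iff_unique_mem.2
        ⟨(hroot' y (Finset.mem_union_right _ hy)) ▸ hy,
         fun x hx => hroot' x (Finset.mem_union_right _ hx)⟩
      rw [hArt, hBrt]
    · -- depth m > 0
      have hmr : m ≠ T.root := fun h => hd (h ▸ T.depth_root)
      obtain ⟨p, hpm⟩ := T.exists_parent hmr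
      obtain ⟨P, hP, hmP⟩ := T.exists_maxPath m
      have hPB : P ∈ covS T B := hAB ▸ mem_covS.2 ⟨m, hmA, hP, hmP⟩
      obtain ⟨b, hbB, -, hbP⟩ := mem_covS.1 hPB
      have hbm : Relation.ReflTransGen T.step b m := by
        rcases hP.1.2.1 m hmP b hbP with h | h
        · exact (T.eq_of_rtg_of_depth_le h
            (hmax b (Finset.mem_union_right _ hbB))) ▸ Relation.ReflTransGen.refl
        · exact h
      by_cases hbm' : b = m
      · -- removal case: m ∈ A ∩ B
        subst hbm'
        have hAe : IsAnti T (A.erase b) := fun x hx y hy hne =>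
          hA x (Finset.mem_of_mem_erase hx) y (Finset.mem_of_mem_erase hy) hne
        have hBe : IsAnti T (B.erase b) := fun x hx y hy hne =>
          hB x (Finset.mem_of_mem_erase hx) y (Finset.mem_of_mem_erase hy) hne
        have h1 : covS T (A.erase b) = covS T (B.erase b) :=
          Set.Subset.antisymm (covS_erase_subset T hA hAB hmA hbB)
            (covS_erase_subset T hB hAB.symm hbB hmA)
        have n1 : (∑ x ∈ A.erase b, (T.depth x + 1)) + (T.depth b + 1) =
            ∑ x ∈ A, (T.depth x + 1) := Finset.sum_erase_add A _ hmA
        have n2 : (∑ x ∈ B.erase b, (T.depth x + 1)) + (T.depth b + 1) =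
            ∑ x ∈ B, (T.depth x + 1) := Finset.sum_erase_add B _ hbB
        have hres := ih ((∑ x ∈ A.erase b, (T.depth x + 1)) +
            (∑ y ∈ B.erase b, (T.depth y + 1))) (by omega)
          (A.erase b) (B.erase b) hAe hBe h1 le_rfl
        have e1 := Finset.sum_erase_add A μ hmA
        have e2 := Finset.sum_erase_add B μ hbB
        linarith
      · -- replacement case: b is a proper ancestor of m
        have hbp : Relation.ReflTransGen T.step b p := by
          rcases hbm.cases_tail with h | ⟨q, hbq, hqm⟩
          · exact absurd h.symm hbm'
          · rwa [T.parent_unique hqm hpm] at hbq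
        set C := (hfin p).toFinset with hC
        have hmC : m ∈ C := (hfin p).mem_toFinset.2 hpm
        have hCA : C ⊆ A := by
          intro c hc
          have hpc : T.step p c := (hfin p).mem_toFinset.1 hc
          obtain ⟨Q, hQ, hcQ⟩ := T.exists_maxPath c
          have hpQ : p ∈ Q := hQ.1.2.2 p c (Relation.ReflTransGen.single hpc) hcQ
          have hbQ : b ∈ Q := hQ.1.2.2 b p hbp hpQ
          have hQA : Q ∈ covS T A := hAB.symm ▸ mem_covS.2 ⟨b, hbB, hQ, hbQ⟩
          obtain ⟨a', ha'A, -, ha'Q⟩ := mem_covS.1 hQA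
          have hdc : T.depth c = T.depth m := by
            rw [T.depth_step hpc, T.depth_step hpm]
          have ha'c : Relation.ReflTransGen T.step a' c := by
            rcases hQ.1.2.1 c hcQ a' ha'Q with h | h
            · exact (T.eq_of_rtg_of_depth_le h
                (by rw [hdc]; exact hmax a' (Finset.mem_union_left _ ha'A))) ▸
                Relation.ReflTransGen.refl
            · exact h
          rcases ha'c.cases_tail with h | ⟨q, ha'q, hqc⟩
          · exact h ▸ ha'A
          · rw [T.parent_unique hqc hpc] at ha'q
            have ha'm : Relation.ReflTransGen T.step a' m := ha'q.tail hpm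
            have hne : a' ≠ m := by
              intro h; subst h
              exact T.acyclic p
                (Relation.TransGen.trans_left (Relation.TransGen.single hpm) ha'q)
            exact absurd ha'm (hA a' ha'A m hmA hne).1
        have hpA : p ∉ A := fun h =>
          (hA p h m hmA (T.ne_of_step_rtg hpm)).1 (Relation.ReflTransGen.single hpm)
        have hpAC : p ∉ A \ C := fun h => hpA (Finset.mem_sdiff.1 h).1
        have hfact : ∀ w ∈ A \ C,
            ¬ Relation.ReflTransGen T.step w p ∧ ¬ Relation.ReflTransGen T.step p w := by
          intro w hw
          obtain ⟨hwA, hwC⟩ := Finset.mem_sdiff.1 hw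
          have hwm : w ≠ m := fun h => hwC (h ▸ hmC)
          constructor
          · intro h
            exact (hA w hwA m hmA hwm).1 (h.tail hpm)
          · intro h
            rcases h.cases_head with rfl | ⟨c, hpc, hcw⟩
            · exact hpA hwA
            · have hcC : c ∈ C := (hfin p).mem_toFinset.2 hpc
              have hcw' : c ≠ w := fun h => hwC (h ▸ hcC)
              exact (hA c (hCA hcC) w hwA hcw').1 hcw
        have hA'anti : IsAnti T (insert p (A \ C)) := by
          intro u hu w hw hne
          rcases Finset.mem_insert.1 hu with rfl | hu'
          · rcases Finset.mem_insert.1 hw with rfl | hw'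
            · exact absurd rfl hne
            · exact ⟨(hfact w hw').2, (hfact w hw').1⟩
          · rcases Finset.mem_insert.1 hw with rfl | hw'
            · exact ⟨(hfact u hu').1, (hfact u hu').2⟩
            · exact hA u (Finset.mem_sdiff.1 hu').1 w (Finset.mem_sdiff.1 hw').1 hne
        have hcovA' : covS T (insert p (A \ C)) = covS T A := by
          ext P'
          constructor
          · intro h
            obtain ⟨u, hu, hP', huP'⟩ := mem_covS.1 h
            rcases Finset.mem_insert.1 hu with rfl | hu'
            · obtain ⟨c, hpc, hcP'⟩ := T.child_mem_maxPath hP' huP' hpm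
              exact mem_covS.2 ⟨c, hCA ((hfin u).mem_toFinset.2 hpc), hP', hcP'⟩
            · exact mem_covS.2 ⟨u, (Finset.mem_sdiff.1 hu').1, hP', huP'⟩
          · intro h
            obtain ⟨u, hu, hP', huP'⟩ := mem_covS.1 h
            by_cases huC : u ∈ C
            · have hpu : T.step p u := (hfin p).mem_toFinset.1 huC
              exact mem_covS.2 ⟨p, Finset.mem_insert_self _ _, hP',
                hP'.1.2.2 p u (Relation.ReflTransGen.single hpu) huP'⟩
            · exact mem_covS.2 ⟨u, Finset.mem_insert_of_mem
                (Finset.mem_sdiff.2 ⟨hu, huC⟩), hP', huP'⟩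
        have hsumA' : ∑ x ∈ insert p (A \ C), μ x = ∑ x ∈ A, μ x := by
          rw [Finset.sum_insert hpAC, ← Finset.sum_sdiff hCA, ← hbr p ⟨m, hpm⟩]
          ring
        have hNm : (∑ x ∈ insert p (A \ C), (T.depth x + 1)) <
            ∑ x ∈ A, (T.depth x + 1) := by
          rw [Finset.sum_insert hpAC,
            ← Finset.sum_sdiff hCA (f := fun x => T.depth x + 1)]
          have h1 : T.depth m + 1 ≤ ∑ c ∈ C, (T.depth c + 1) :=
            Finset.single_le_sum (f := fun c => T.depth c + 1) (fun i _ => Nat.zero_le _) hmC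
          have h2 : T.depth m = T.depth p + 1 := T.depth_step hpm
          omega
        rw [← hsumA']
        exact ih ((∑ x ∈ insert p (A \ C), (T.depth x + 1)) +
            (∑ y ∈ B, (T.depth y + 1))) (by omega)
          (insert p (A \ C)) B hA'anti hB (hcovA'.trans hAB) le_rfl
  obtain ⟨x0, hx0⟩ := Finset.nonempty_iff_ne_empty.2 hXe
  obtain ⟨m, hm, hmax⟩ := Finset.exists_max_image (X ∪ Y) T.depth
    ⟨x0, Finset.mem_union_left _ hx0⟩
  rcases Finset.mem_union.1 hm with h | h
  · exact main X Y hX hY hcov hn m h hmax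
  · exact (main Y X hY hX hcov.symm (by omega) m h
      (fun v hv => hmax v (Finset.mem_union.2 (Finset.mem_union.1 hv).symm))).symm

/-- for a vertex weight μ with μ(root)=1 and μ additive over
children, any two finite antichains covering the same set of maximal paths
have equal total weight. -/
theorem stmt_12 [Countable V] (T : QTree V)
    (hfin : ∀ a : V, {b : V | T.step a b}.Finite)
    (μ : V → ℝ) (hμ01 : ∀ a, 0 ≤ μ a ∧ μ a ≤ 1) (hroot : μ T.root = 1)
    (hbr : ∀ a : V, (∃ b, T.step a b) → μ a = ∑ b ∈ (hfin a).toFinset, μ b)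
    (X Y : Finset V)
    (hX : ∀ x ∈ X, ∀ y ∈ X, x ≠ y →
      ¬ Relation.ReflTransGen T.step x y ∧ ¬ Relation.ReflTransGen T.step y x)
    (hY : ∀ x ∈ Y, ∀ y ∈ Y, x ≠ y →
      ¬ Relation.ReflTransGen T.step x y ∧ ¬ Relation.ReflTransGen T.step y x)
    (hcov : (⋃ x ∈ X, {P : Set V | IsMaxPath T P ∧ x ∈ P}) =
            ⋃ y ∈ Y, {P : Set V | IsMaxPath T P ∧ y ∈ P}) :
    ∑ x ∈ X, μ x = ∑ y ∈ Y, μ y :=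
  key_lemma T hfin μ hbr
    ((∑ x ∈ X, (T.depth x + 1)) + (∑ y ∈ Y, (T.depth y + 1))) X Y hX hY hcov le_rfl
end

section
/- Let (A, →) be a rooted tree on a countable vertex set with finite branching, and let μ : {vertices} → [0,1] satisfy μ(root) = 1 and μ(a) = Σ_{b : a→b} μ(b) for every non-leaf a. Define ν on the semiring 𝒮 = {ω(A/a) : a ∈ A} ∪ {∅} of subsets of ω(A) by ν(∅) = 0 and ν(ω(A/a)) = μ(a). If additionally every maximal path of A is infinite, then ν is well-defined, additive, and σ-subadditive on 𝒮, with ν(ω(A)) = 1; hence ν extends uniquely to a probability measure on the σ-algebra generated by 𝒮. -/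
variable {V : Type*}

namespace QTreeAux

open Relation

variable (T : QTree V)

lemma antisymm {a b : V} (hab : ReflTransGen T.step a b)
    (hba : ReflTransGen T.step b a) : a = b := by
  by_contra h
  rcases hab.cases_head with rfl | ⟨c, hac, hcb⟩
  · exact h rfl
  · exact T.acyclic a (TransGen.head' hac (hcb.trans hba))

lemma comparable {a b c : V} (hac : ReflTransGen T.step a c)
    (hbc : ReflTransGen T.step b c) :
    ReflTransGen T.step a b ∨ ReflTransGen T.step b a := by
  induction hbc generalizing a with
  | refl => exact Or.inl hac
  | @tail d c' hbd hdc ih =>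
    rcases hac.cases_tail with h | ⟨e, hae, hec⟩
    · exact Or.inr (h ▸ hbd.tail hdc)
    · exact ih (T.parent_unique hec hdc ▸ hae)

lemma anc_finite (v : V) : {a | ReflTransGen T.step a v}.Finite := by
  have h := T.reach v
  induction h with
  | refl =>
    refine (Set.finite_singleton T.root).subset fun a ha => ?_
    rcases (ha : ReflTransGen T.step a T.root).cases_tail with h | ⟨e, _, hec⟩
    · exact h ▸ rfl
    · exact absurd hec (T.not_step_root e)
  | @tail b c hb hstep ih =>
    refine (ih.insert c).subset fun a ha => ?_
    rcases (ha : ReflTransGen T.step a c).cases_tail with h | ⟨e, hae, hec⟩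
    · exact h ▸ Set.mem_insert _ _
    · exact Set.mem_insert_of_mem _ (T.parent_unique hec hstep ▸ hae)

def sAnc (v : V) : Set V := {a | ReflTransGen T.step a v ∧ a ≠ v}

lemma sAnc_finite (v : V) : (sAnc T v).Finite :=
  (anc_finite T v).subset fun _ h => h.1

noncomputable def depth (v : V) : ℕ := (sAnc T v).ncard

lemma depth_lt {a b : V} (hab : ReflTransGen T.step a b) (hne : a ≠ b) :
    depth T a < depth T b := by
  have hsub : sAnc T a ⊆ sAnc T b := by
    rintro x ⟨hxa, hxna⟩
    refine ⟨hxa.trans hab, fun h => hxna (antisymm T hxa (h ▸ hab))⟩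
  have hmem : a ∈ sAnc T b := ⟨hab, hne⟩
  exact Set.ncard_lt_ncard ⟨hsub, fun hsup => (hsup hmem).2 rfl⟩ (sAnc_finite T b)

lemma depth_le {a b : V} (hab : ReflTransGen T.step a b) :
    depth T a ≤ depth T b := by
  rcases eq_or_ne a b with rfl | h
  · exact le_rfl
  · exact (depth_lt T hab h).le

lemma eq_of_depth_le {a b : V} (hab : ReflTransGen T.step a b)
    (h : depth T b ≤ depth T a) : a = b := by
  by_contra hne
  exact absurd h (not_le.mpr (depth_lt T hab hne))

lemma step_ne {a b : V} (h : T.step a b) : a ≠ b :=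
  fun he => T.acyclic a (TransGen.single (he ▸ h))

lemma depth_step {a b : V} (h : T.step a b) : depth T b = depth T a + 1 := by
  have hab : ReflTransGen T.step a b := ReflTransGen.single h
  have hset : sAnc T b = insert a (sAnc T a) := by
    ext x
    constructor
    · rintro ⟨hxb, hxnb⟩
      rcases hxb.cases_tail with he | ⟨e, hxe, hec⟩
      · exact absurd he.symm hxnb
      · rw [T.parent_unique hec h] at hxe
        rcases eq_or_ne x a with rfl | hxa
        · exact Set.mem_insert _ _
        · exact Set.mem_insert_of_mem _ ⟨hxe, hxa⟩
    · rintro (rfl | ⟨hxa, hxna⟩)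
      · exact ⟨hab, step_ne T h⟩
      · refine ⟨hxa.trans hab, fun he => ?_⟩
        exact T.acyclic b (TransGen.tail' (he ▸ hxa) h)
  have hnm : a ∉ sAnc T a := fun h => h.2 rfl
  rw [depth, hset, Set.ncard_insert_of_notMem hnm (sAnc_finite T a)]
  rfl

lemma depth_root : depth T T.root = 0 := by
  have : sAnc T T.root = ∅ := by
    ext x
    simp only [Set.mem_empty_iff_false, iff_false]
    rintro ⟨hx, hxn⟩
    rcases hx.cases_tail with h | ⟨e, _, hec⟩
    · exact hxn h.symm
    · exact T.not_step_root e hec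
  rw [depth, this, Set.ncard_empty]

lemma eq_of_comparable_depth {a b : V}
    (h : ReflTransGen T.step a b ∨ ReflTransGen T.step b a)
    (hd : depth T a = depth T b) : a = b := by
  rcases h with h | h
  · exact eq_of_depth_le T h hd.ge
  · exact (eq_of_depth_le T h hd.le).symm

lemma rootedPath_anc (v : V) : IsRootedPath T {a | ReflTransGen T.step a v} :=
  ⟨T.reach v, fun a ha b hb => comparable T ha hb, fun a b hab hb => hab.trans hb⟩

lemma exists_maxPath (v : V) : ∃ P, IsMaxPath T P ∧ v ∈ P := by
  obtain ⟨m, hsub, hmem, hmax⟩ :=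
    zorn_subset_nonempty {Q | IsRootedPath T Q}
      (fun c hc hchain hne => by
        obtain ⟨Q0, hQ0⟩ := hne
        refine ⟨⋃₀ c, ⟨⟨Q0, hQ0, (hc hQ0).1⟩, ?_, ?_⟩, fun s hs => Set.subset_sUnion_of_mem hs⟩
        · rintro a ⟨Q1, hQ1, haQ1⟩ b ⟨Q2, hQ2, hbQ2⟩
          rcases hchain.total hQ1 hQ2 with h | h
          · exact (hc hQ2).2.1 a (h haQ1) b hbQ2
          · exact (hc hQ1).2.1 a haQ1 b (h hbQ2)
        · rintro a b hab ⟨Q1, hQ1, hbQ1⟩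
          exact ⟨Q1, hQ1, (hc hQ1).2.2 a b hab hbQ1⟩)
      {a | ReflTransGen T.step a v} (rootedPath_anc T v)
  exact ⟨m, ⟨hmem, fun Q hQ hmQ => hmQ.antisymm (hmax hQ hmQ)⟩,
    hsub ReflTransGen.refl⟩

variable (hinf : ∀ P : Set V, IsMaxPath T P → P.Infinite)
include hinf

lemma mem_child {P : Set V} (hP : IsMaxPath T P) {v : V} (hv : v ∈ P) :
    ∃ c, T.step v c ∧ c ∈ P := by
  have h1 : ¬ P ⊆ {a | ReflTransGen T.step a v} :=
    fun h => hinf P hP ((anc_finite T v).subset h)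
  obtain ⟨w, hwP, hwv⟩ := Set.not_subset.1 h1
  have hvw : ReflTransGen T.step v w :=
    (hP.1.2.1 v hv w hwP).resolve_right fun h => hwv h
  rcases hvw.cases_head with rfl | ⟨c, hvc, hcw⟩
  · exact absurd (ReflTransGen.refl) hwv
  · exact ⟨c, hvc, hP.1.2.2 c w hcw hwP⟩

lemma no_leaf (v : V) : ∃ c, T.step v c := by
  obtain ⟨P, hP, hv⟩ := exists_maxPath T v
  obtain ⟨c, hc, -⟩ := mem_child T hinf hP hv
  exact ⟨c, hc⟩

omit hinf

lemma maxPath_of_infinite {P : Set V} (hP : IsRootedPath T P) (h : P.Infinite) :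
    IsMaxPath T P := by
  refine ⟨hP, fun Q hQ hPQ => hPQ.antisymm fun q hq => ?_⟩
  by_contra hqP
  refine h ((anc_finite T q).subset fun p hp => ?_)
  rcases hQ.2.1 q hq p (hPQ hp) with hc | hc
  · exact absurd (hP.2.2 q p hc hp) hqP
  · exact hc

include hinf

lemma exists_depth_mem {P : Set V} (hP : IsMaxPath T P) (n : ℕ) :
    ∃ v ∈ P, depth T v = n := by
  induction n with
  | zero => exact ⟨T.root, hP.1.1, depth_root T⟩
  | succ n ih =>
    obtain ⟨v, hv, hd⟩ := ih
    obtain ⟨c, hc, hcP⟩ := mem_child T hinf hP hv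
    exact ⟨c, hcP, by rw [depth_step T hc, hd]⟩

omit hinf

def Level (n : ℕ) (v : V) : Set V := {b | Relation.ReflTransGen T.step v b ∧ depth T b = n}

variable (hfin : ∀ a : V, {b : V | T.step a b}.Finite)

lemma level_subset_singleton {n : ℕ} {v : V} (h : n ≤ depth T v) :
    Level T n v ⊆ {v} := by
  rintro b ⟨hvb, hdb⟩
  have : v = b := eq_of_depth_le T hvb (hdb.le.trans h)
  exact this ▸ rfl

include hfin in
lemma level_finite : ∀ (k n : ℕ) (v : V), n ≤ depth T v + k → (Level T n v).Finite := by
  intro k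
  induction k with
  | zero =>
    intro n v h
    exact (Set.finite_singleton v).subset
      (level_subset_singleton T (by simpa using h))
  | succ k ih =>
    intro n v h
    rcases le_or_gt n (depth T v) with hle | hlt
    · exact (Set.finite_singleton v).subset (level_subset_singleton T hle)
    · have hsub : Level T n v ⊆ ⋃ c ∈ {c | T.step v c}, Level T n c := by
        rintro b ⟨hvb, hdb⟩
        have hne : v ≠ b := fun he => absurd (he ▸ hdb) hlt.ne
        rcases hvb.cases_head with he | ⟨c, hvc, hcb⟩
        · exact absurd he hne
        · refine Set.mem_biUnion hvc ⟨hcb, hdb⟩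
      refine ((hfin v).biUnion fun c hc => ih n c ?_).subset hsub
      rw [depth_step T hc]
      omega

include hfin in
lemma level_finite' (n : ℕ) (v : V) : (Level T n v).Finite :=
  level_finite T hfin (n - depth T v) n v (by omega)

/-- canonical finset for a level -/
noncomputable def levelFin (n : ℕ) (v : V) : Finset V :=
  (level_finite' T hfin n v).toFinset

lemma mem_levelFin {n : ℕ} {v b : V} :
    b ∈ levelFin T hfin n v ↔ Relation.ReflTransGen T.step v b ∧ depth T b = n := by
  simp [levelFin, Level]

lemma coe_levelFin (n : ℕ) (v : V) : (levelFin T hfin n v : Set V) = Level T n v := by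
  simp [levelFin]

variable {μ : V → ℝ}

include hinf hfin in
lemma mass (hbr : ∀ a : V, (∃ b, T.step a b) → μ a = ∑ b ∈ (hfin a).toFinset, μ b) :
    ∀ (k : ℕ) (v : V), μ v = ∑ b ∈ levelFin T hfin (depth T v + k) v, μ b := by
  classical
  intro k
  induction k with
  | zero =>
    intro v
    have : levelFin T hfin (depth T v + 0) v = {v} := by
      ext b
      simp only [mem_levelFin, Finset.mem_singleton]
      constructor
      · rintro ⟨hvb, hdb⟩
        exact (eq_of_depth_le T hvb (by omega)).symm
      · rintro rfl
        exact ⟨ReflTransGen.refl, by omega⟩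
    rw [this, Finset.sum_singleton]
  | succ k ih =>
    intro v
    set A := levelFin T hfin (depth T v + k) v with hA
    have hBU : levelFin T hfin (depth T v + k + 1) v
        = A.biUnion (fun b => (hfin b).toFinset) := by
      ext x
      simp only [mem_levelFin, Finset.mem_biUnion, hA, Set.Finite.mem_toFinset,
        Set.mem_setOf_eq]
      constructor
      · rintro ⟨hvx, hdx⟩
        rcases hvx.cases_tail with he | ⟨b, hvb, hbx⟩
        · subst he
          omega
        · have hdb : depth T b = depth T v + k := by
            have := depth_step T hbx
            omega
          exact ⟨b, ⟨hvb, hdb⟩, hbx⟩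
      · rintro ⟨b, hb, hbx⟩
        obtain ⟨hvb, hdb⟩ := hb
        exact ⟨hvb.tail hbx, by rw [depth_step T hbx, hdb]⟩
    have hdisj : (A : Set V).PairwiseDisjoint (fun b => (hfin b).toFinset) := by
      intro b1 _ b2 _ hne
      refine Finset.disjoint_left.mpr fun x hx1 hx2 => hne ?_
      rw [Set.Finite.mem_toFinset] at hx1 hx2
      exact T.parent_unique hx1 hx2
    rw [show depth T v + (k + 1) = depth T v + k + 1 by omega, hBU,
      Finset.sum_biUnion hdisj]
    rw [ih v]
    exact Finset.sum_congr rfl fun b _ => hbr b (no_leaf T hinf b)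

include hinf hfin in
lemma mass' (hbr : ∀ a : V, (∃ b, T.step a b) → μ a = ∑ b ∈ (hfin a).toFinset, μ b)
    {n : ℕ} {v : V} (h : depth T v ≤ n) :
    μ v = ∑ b ∈ levelFin T hfin n v, μ b := by
  have := mass T hinf hfin hbr (n - depth T v) v
  rwa [show depth T v + (n - depth T v) = n by omega] at this

def Cyl (a : V) : Set (MaxPath T) := {P : MaxPath T | a ∈ P.1}

lemma cyl_nonempty (a : V) : (Cyl T a).Nonempty := by
  obtain ⟨P, hP, ha⟩ := exists_maxPath T a
  exact ⟨⟨P, hP⟩, ha⟩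

lemma cyl_mono {a b : V} (hab : Relation.ReflTransGen T.step a b) :
    Cyl T b ⊆ Cyl T a := fun P hP => P.2.1.2.2 a b hab hP

lemma mem_comparable {P : MaxPath T} {a b : V} (ha : a ∈ P.1) (hb : b ∈ P.1) :
    Relation.ReflTransGen T.step a b ∨ Relation.ReflTransGen T.step b a :=
  P.2.1.2.1 a ha b hb

/-- two cylinders whose base points lie on a common path intersect -/
lemma cyl_inter_nonempty {a b : V} (hab : Relation.ReflTransGen T.step a b) :
    (Cyl T a ∩ Cyl T b).Nonempty := by
  obtain ⟨P, hPb⟩ := cyl_nonempty T b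
  exact ⟨P, cyl_mono T hab hPb, hPb⟩

/-- the workhorse: a finite cover of a cylinder by cylinders covers levels -/
lemma level_cover {a : V} {ι : Type*} {s : Finset ι} {f : ι → V}
    (hcov : Cyl T a ⊆ ⋃ i ∈ s, Cyl T (f i)) (n : ℕ)
    (hnf : ∀ i ∈ s, depth T (f i) ≤ n) :
    Level T n a ⊆ ⋃ i ∈ s, Level T n (f i) := by
  rintro b ⟨hab, hdb⟩
  obtain ⟨P, hP, hbP⟩ := exists_maxPath T b
  have haP : a ∈ P := hP.1.2.2 a b hab hbP
  obtain ⟨Si, hSi⟩ := Set.mem_iUnion.mp (hcov (show (⟨P, hP⟩ : MaxPath T) ∈ Cyl T a from haP))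
  obtain ⟨his, hfiP⟩ := Set.mem_iUnion.mp hSi
  have hfib : Relation.ReflTransGen T.step (f Si) b := by
    rcases mem_comparable T (P := ⟨P, hP⟩) hfiP hbP with h | h
    · exact h
    · have : b = f Si := eq_of_depth_le T h (by rw [hdb]; exact hnf Si his)
      exact this ▸ ReflTransGen.refl
  exact Set.mem_biUnion his ⟨hfib, hdb⟩

lemma level_disjoint {a b : V} (h : Disjoint (Cyl T a) (Cyl T b)) (n : ℕ) :
    Disjoint (Level T n a) (Level T n b) := by
  rw [Set.disjoint_left]
  rintro x ⟨hax, -⟩ ⟨hbx, -⟩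
  obtain ⟨P, hP, hxP⟩ := exists_maxPath T x
  exact Set.disjoint_left.mp h (show (⟨P,hP⟩ : MaxPath T) ∈ Cyl T a from hP.1.2.2 a x hax hxP)
    (show (⟨P,hP⟩ : MaxPath T) ∈ Cyl T b from hP.1.2.2 b x hbx hxP)

include hinf hfin in
/-- well-definedness, directed version -/
lemma mu_eq_of_cyl_eq_dir (hbr : ∀ a : V, (∃ b, T.step a b) → μ a = ∑ b ∈ (hfin a).toFinset, μ b)
    {a b : V} (h : Cyl T a = Cyl T b) (hab : Relation.ReflTransGen T.step a b) :
    μ a = μ b := by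
  have hsing : levelFin T hfin (depth T b) a = {b} := by
    ext c
    simp only [mem_levelFin, Finset.mem_singleton]
    constructor
    · rintro ⟨hac, hdc⟩
      obtain ⟨P, hP, hcP⟩ := exists_maxPath T c
      have haP : a ∈ P := hP.1.2.2 a c hac hcP
      have hbP : b ∈ P := by
        have : (⟨P, hP⟩ : MaxPath T) ∈ Cyl T b := h ▸ haP
        exact this
      exact eq_of_comparable_depth T (mem_comparable T (P := ⟨P, hP⟩) hcP hbP) hdc
    · rintro rfl
      exact ⟨hab, rfl⟩
  rw [mass' T hinf hfin hbr (depth_le T hab), hsing, Finset.sum_singleton]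

include hinf hfin in
lemma mu_eq_of_cyl_eq (hbr : ∀ a : V, (∃ b, T.step a b) → μ a = ∑ b ∈ (hfin a).toFinset, μ b)
    {a b : V} (h : Cyl T a = Cyl T b) : μ a = μ b := by
  obtain ⟨P, hPa⟩ := cyl_nonempty T a
  have hPb : P ∈ Cyl T b := h ▸ hPa
  rcases mem_comparable T hPa hPb with hc | hc
  · exact mu_eq_of_cyl_eq_dir T hinf hfin hbr h hc
  · exact (mu_eq_of_cyl_eq_dir T hinf hfin hbr h.symm hc).symm

lemma sum_biUnion_le_of_nonneg {ι : Type*} [DecidableEq V] {g : V → ℝ}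
    (hg : ∀ v, 0 ≤ g v) (s : Finset ι) (B : ι → Finset V) :
    ∑ x ∈ s.biUnion B, g x ≤ ∑ i ∈ s, ∑ x ∈ B i, g x := by
  classical
  induction s using Finset.induction_on with
  | empty => simp
  | insert i s hni ih =>
    rw [Finset.biUnion_insert, Finset.sum_insert hni]
    calc ∑ x ∈ B i ∪ s.biUnion B, g x
        ≤ (∑ x ∈ B i, g x) + ∑ x ∈ s.biUnion B, g x := by
          have := Finset.sum_union_inter (s₁ := B i) (s₂ := s.biUnion B) (f := g)
          have hnn : 0 ≤ ∑ x ∈ B i ∩ s.biUnion B, g x :=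
            Finset.sum_nonneg fun x _ => hg x
          linarith
      _ ≤ _ := by linarith [ih]

include hinf hfin in
lemma fin_subadd (hbr : ∀ a : V, (∃ b, T.step a b) → μ a = ∑ b ∈ (hfin a).toFinset, μ b)
    (hμ0 : ∀ v, 0 ≤ μ v) {a : V} {ι : Type*} {s : Finset ι} {f : ι → V}
    (hcov : Cyl T a ⊆ ⋃ i ∈ s, Cyl T (f i)) :
    μ a ≤ ∑ i ∈ s, μ (f i) := by
  classical
  set n : ℕ := max (depth T a) (s.sup fun i => depth T (f i)) with hn
  have hda : depth T a ≤ n := le_max_left _ _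
  have hdf : ∀ i ∈ s, depth T (f i) ≤ n :=
    fun i hi => le_max_of_le_right (Finset.le_sup (f := fun i => depth T (f i)) hi)
  have hsub : levelFin T hfin n a ⊆ s.biUnion (fun i => levelFin T hfin n (f i)) := by
    rw [← Finset.coe_subset, Finset.coe_biUnion, coe_levelFin]
    refine subset_trans (level_cover T hcov n hdf) ?_
    exact Set.iUnion₂_mono fun i hi => by rw [coe_levelFin]
  calc μ a = ∑ b ∈ levelFin T hfin n a, μ b := mass' T hinf hfin hbr hda
    _ ≤ ∑ b ∈ s.biUnion (fun i => levelFin T hfin n (f i)), μ b :=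
        Finset.sum_le_sum_of_subset_of_nonneg hsub fun x _ _ => hμ0 x
    _ ≤ ∑ i ∈ s, ∑ b ∈ levelFin T hfin n (f i), μ b :=
        sum_biUnion_le_of_nonneg hμ0 _ _
    _ = ∑ i ∈ s, μ (f i) :=
        Finset.sum_congr rfl fun i hi => (mass' T hinf hfin hbr (hdf i hi)).symm

include hinf hfin in
lemma additive (hbr : ∀ a : V, (∃ b, T.step a b) → μ a = ∑ b ∈ (hfin a).toFinset, μ b)
    {a : V} {K : ℕ} {f : Fin K → V}
    (hdisj : Pairwise (Function.onFun Disjoint (fun i => Cyl T (f i))))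
    (heq : Cyl T a = ⋃ i, Cyl T (f i)) :
    μ a = ∑ i, μ (f i) := by
  classical
  set n : ℕ := max (depth T a) (Finset.univ.sup fun i => depth T (f i)) with hn
  have hda : depth T a ≤ n := le_max_left _ _
  have hdf : ∀ i : Fin K, depth T (f i) ≤ n :=
    fun i => le_max_of_le_right (Finset.le_sup (f := fun i => depth T (f i)) (Finset.mem_univ i))
  have hBU : levelFin T hfin n a
      = Finset.univ.biUnion (fun i => levelFin T hfin n (f i)) := by
    refine Finset.coe_injective ?_
    rw [Finset.coe_biUnion, coe_levelFin]
    apply Set.Subset.antisymm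
    · refine subset_trans (level_cover T (s := Finset.univ) (f := f) ?_ n fun i _ => hdf i) ?_
      · rw [heq]
        exact fun P hP => by simpa using hP
      · exact Set.iUnion₂_mono fun i hi => by rw [coe_levelFin]
    · refine Set.iUnion₂_subset fun i _ => ?_
      rw [coe_levelFin]
      have hsingle : Cyl T (f i) ⊆ ⋃ j ∈ ({i} : Finset (Fin K)), Cyl T a := by
        intro P hP
        refine Set.mem_biUnion (Finset.mem_singleton_self i) ?_
        rw [heq]
        exact Set.mem_iUnion.mpr ⟨i, hP⟩
      have := level_cover T hsingle n (fun j _ => hda)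
      refine subset_trans this ?_
      simp
  have hdisjL : ((Finset.univ : Finset (Fin K)) : Set (Fin K)).PairwiseDisjoint
      (fun i => levelFin T hfin n (f i)) := by
    intro i _ j _ hij
    have := level_disjoint T (hdisj hij) n
    show Disjoint (levelFin T hfin n (f i)) (levelFin T hfin n (f j))
    rw [Finset.disjoint_left]
    intro x hx1 hx2
    rw [mem_levelFin] at hx1 hx2
    exact Set.disjoint_left.mp this hx1 hx2
  calc μ a = ∑ b ∈ levelFin T hfin n a, μ b := mass' T hinf hfin hbr hda
    _ = ∑ i, ∑ b ∈ levelFin T hfin n (f i), μ b := by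
        rw [hBU, Finset.sum_biUnion hdisjL]
    _ = ∑ i, μ (f i) :=
        Finset.sum_congr rfl fun i _ => (mass' T hinf hfin hbr (hdf i)).symm

include hinf hfin in
lemma subcover {a : V} (t : ℕ → Set (MaxPath T))
    (ht : ∀ k, t k = ∅ ∨ ∃ b, t k = Cyl T b)
    (hcov : Cyl T a ⊆ ⋃ k, t k) :
    ∃ K : ℕ, Cyl T a ⊆ ⋃ k ∈ Finset.range K, t k := by
  classical
  by_contra hno
  push_neg at hno
  have hex : ∀ K : ℕ, ∃ P : MaxPath T, P ∈ Cyl T a ∧ P ∉ ⋃ k ∈ Finset.range K, t k := by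
    intro K
    obtain ⟨P, hP1, hP2⟩ := Set.not_subset.mp (hno K)
    exact ⟨P, hP1, hP2⟩
  choose g hg1 hg2 using hex
  -- vertices lying on infinitely many of the witnesses
  set S : V → Prop := fun v => {K : ℕ | v ∈ (g K).1}.Infinite with hS
  have ha : S a := by
    have : {K : ℕ | a ∈ (g K).1} = Set.univ := Set.eq_univ_of_forall fun K => hg1 K
    rw [hS]
    simp only [this]
    exact Set.infinite_univ
  have hchild : ∀ v, S v → ∃ c, T.step v c ∧ S c := by
    intro v hv
    by_contra hnc
    push_neg at hnc
    have hfinKc : ∀ c ∈ {c | T.step v c}, {K : ℕ | c ∈ (g K).1}.Finite := by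
      intro c hc
      exact Set.not_infinite.mp (hnc c hc)
    have hsubK : {K : ℕ | v ∈ (g K).1} ⊆ ⋃ c ∈ {c | T.step v c}, {K : ℕ | c ∈ (g K).1} := by
      intro K hK
      obtain ⟨c, hc, hcg⟩ := mem_child T hinf (g K).2 hK
      exact Set.mem_biUnion hc hcg
    exact hv (((hfin v).biUnion hfinKc).subset hsubK)
  -- build the branch through `a`
  let p : ℕ → {v : V // S v} := fun n =>
    Nat.rec ⟨a, ha⟩ (fun _ prev => ⟨(hchild prev.1 prev.2).choose,
      (hchild prev.1 prev.2).choose_spec.2⟩) n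
  have hpstep : ∀ n, T.step (p n).1 (p (n + 1)).1 :=
    fun n => (hchild (p n).1 (p n).2).choose_spec.1
  have hpreach : ∀ m n, m ≤ n → Relation.ReflTransGen T.step (p m).1 (p n).1 := by
    intro m n hmn
    induction n with
    | zero =>
      obtain rfl := Nat.le_zero.mp hmn
      exact ReflTransGen.refl
    | succ n ih =>
      rcases Nat.lt_or_ge m (n+1) with h | h
      · exact (ih (by omega)).tail (hpstep n)
      · have : m = n + 1 := by omega
        exact this ▸ ReflTransGen.refl
  have hpdepth : ∀ n, depth T (p n).1 = depth T a + n := by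
    intro n
    induction n with
    | zero => rfl
    | succ n ih =>
      rw [depth_step T (hpstep n), ih]
      omega
  -- the limit path
  set Pstar : Set V := {x | ∃ n, Relation.ReflTransGen T.step x (p n).1} with hPstar
  have hrooted : IsRootedPath T Pstar := by
    refine ⟨⟨0, T.reach _⟩, ?_, ?_⟩
    · rintro x ⟨n, hxn⟩ y ⟨m, hym⟩
      rcases le_total n m with h | h
      · exact comparable T (hxn.trans (hpreach n m h)) hym
      · exact comparable T hxn (hym.trans (hpreach m n h))
    · rintro x y hxy ⟨n, hyn⟩
      exact ⟨n, hxy.trans hyn⟩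
  have hinfstar : Pstar.Infinite := by
    refine Set.infinite_of_injective_forall_mem
      (f := fun n => (p n).1) (fun m n hmn => ?_) (fun n => ⟨n, ReflTransGen.refl⟩)
    have hmn' : (p m).1 = (p n).1 := hmn
    have h1 := hpdepth m
    rw [hmn', hpdepth n] at h1
    omega
  have hmax : IsMaxPath T Pstar := maxPath_of_infinite T hrooted hinfstar
  have hastar : a ∈ Pstar := ⟨0, ReflTransGen.refl⟩
  obtain ⟨k, hk⟩ := Set.mem_iUnion.mp (hcov (show (⟨Pstar, hmax⟩ : MaxPath T) ∈ Cyl T a from hastar))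
  have htk : ∃ b, t k = Cyl T b := by
    rcases ht k with h | h
    · rw [h] at hk; exact absurd hk (Set.notMem_empty _)
    · exact h
  obtain ⟨b, hb⟩ := htk
  rw [hb] at hk
  obtain ⟨n, hbn⟩ := (hk : b ∈ Pstar)
  -- choose a large witness index
  obtain ⟨K, hKmem, hKgt⟩ := (p n).2.exists_notMem_finite (Set.finite_le_nat k)
  have hkK : k < K := by simpa using hKgt
  have hbgK : b ∈ (g K).1 := (g K).2.1.2.2 b (p n).1 hbn hKmem
  exact hg2 K (Set.mem_biUnion (Finset.mem_range.mpr hkK) (hb ▸ hbgK))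

open MeasureTheory ENNReal

variable (μ) in
open Classical in
noncomputable def mfun : Set (MaxPath T) → ℝ≥0∞ := fun S =>
  if hS : ∃ b, S = Cyl T b then ENNReal.ofReal (μ hS.choose)
  else if S = ∅ then 0 else ∞

lemma mfun_empty : mfun T μ (∅ : Set (MaxPath T)) = 0 := by
  rw [mfun, dif_neg, if_pos rfl]
  rintro ⟨b, hb⟩
  exact (cyl_nonempty T b).ne_empty hb.symm

lemma mfun_top {S : Set (MaxPath T)} (h1 : S ≠ ∅) (h2 : ¬ ∃ b, S = Cyl T b) :
    mfun T μ S = ∞ := by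
  rw [mfun, dif_neg h2, if_neg h1]

include hinf hfin in
lemma mfun_cyl (hbr : ∀ a : V, (∃ b, T.step a b) → μ a = ∑ b ∈ (hfin a).toFinset, μ b)
    (b : V) : mfun T μ (Cyl T b) = ENNReal.ofReal (μ b) := by
  have hS : ∃ c, Cyl T b = Cyl T c := ⟨b, rfl⟩
  rw [mfun, dif_pos hS]
  exact congrArg ENNReal.ofReal
    (mu_eq_of_cyl_eq T hinf hfin hbr hS.choose_spec.symm)

include hinf hfin in
lemma master (hbr : ∀ a : V, (∃ b, T.step a b) → μ a = ∑ b ∈ (hfin a).toFinset, μ b)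
    (hμ0 : ∀ v, 0 ≤ μ v) {a : V} (t : ℕ → Set (MaxPath T))
    (ht : ∀ k, t k = ∅ ∨ ∃ b, t k = Cyl T b)
    (hcov : Cyl T a ⊆ ⋃ k, t k) :
    ENNReal.ofReal (μ a) ≤ ∑' k, mfun T μ (t k) := by
  classical
  obtain ⟨K, hK⟩ := subcover T hinf hfin t ht hcov
  set J : Finset ℕ := (Finset.range K).filter (fun k => t k ≠ ∅) with hJ
  set b : ℕ → V := fun k => if h : ∃ c, t k = Cyl T c then h.choose else a with hb
  have hJt : ∀ k ∈ J, t k = Cyl T (b k) := by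
    intro k hk
    have hne : t k ≠ ∅ := (Finset.mem_filter.mp hk).2
    have hex : ∃ c, t k = Cyl T c := (ht k).resolve_left hne
    rw [hb]
    simp only [dif_pos hex]
    exact hex.choose_spec
  have hcovJ : Cyl T a ⊆ ⋃ k ∈ J, Cyl T (b k) := by
    intro P hP
    obtain ⟨k, hk⟩ := Set.mem_iUnion.mp (hK hP)
    simp only [Set.mem_iUnion, exists_prop] at hk
    obtain ⟨hkK, hPt⟩ := hk
    have hne : t k ≠ ∅ := fun h => (h ▸ hPt : P ∈ (∅ : Set (MaxPath T)))
    have hkJ : k ∈ J := Finset.mem_filter.mpr ⟨hkK, hne⟩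
    exact Set.mem_biUnion hkJ (hJt k hkJ ▸ hPt)
  have h1 : μ a ≤ ∑ k ∈ J, μ (b k) := fin_subadd T hinf hfin hbr hμ0 hcovJ
  calc ENNReal.ofReal (μ a) ≤ ENNReal.ofReal (∑ k ∈ J, μ (b k)) :=
        ENNReal.ofReal_le_ofReal h1
    _ = ∑ k ∈ J, ENNReal.ofReal (μ (b k)) :=
        ENNReal.ofReal_sum_of_nonneg fun k _ => hμ0 _
    _ = ∑ k ∈ J, mfun T μ (t k) :=
        Finset.sum_congr rfl fun k hk => by
          rw [hJt k hk, mfun_cyl T hinf hfin hbr]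
    _ ≤ ∑ k ∈ Finset.range K, mfun T μ (t k) :=
        Finset.sum_le_sum_of_subset (Finset.filter_subset _ _)
    _ ≤ ∑' k, mfun T μ (t k) := ENNReal.sum_le_tsum _

variable (μ) in
noncomputable def om : OuterMeasure (MaxPath T) :=
  OuterMeasure.ofFunction (mfun T μ) (mfun_empty T)

include hinf hfin in
lemma om_cyl (hbr : ∀ a : V, (∃ b, T.step a b) → μ a = ∑ b ∈ (hfin a).toFinset, μ b)
    (hμ0 : ∀ v, 0 ≤ μ v) (a : V) :
    om T μ (Cyl T a) = ENNReal.ofReal (μ a) := by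
  refine le_antisymm ((OuterMeasure.ofFunction_le _).trans
    (le_of_eq (mfun_cyl T hinf hfin hbr a))) ?_
  rw [om, OuterMeasure.ofFunction_apply]
  refine le_iInf fun t => le_iInf fun hcov => ?_
  by_cases hall : ∀ k, t k = ∅ ∨ ∃ b, t k = Cyl T b
  · exact master T hinf hfin hbr hμ0 t hall hcov
  · push_neg at hall
    obtain ⟨k, hk1, hk2⟩ := hall
    exact le_top.trans ((mfun_top T hk1.ne_empty (not_exists.mpr hk2)) ▸ ENNReal.le_tsum k)

include hinf hfin in
lemma core_split (hbr : ∀ a : V, (∃ b, T.step a b) → μ a = ∑ b ∈ (hfin a).toFinset, μ b)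
    (hμ0 : ∀ v, 0 ≤ μ v) (a b : V) :
    om T μ (Cyl T b ∩ Cyl T a) + om T μ (Cyl T b \ Cyl T a)
      ≤ ENNReal.ofReal (μ b) := by
  classical
  by_cases hd : Disjoint (Cyl T a) (Cyl T b)
  · rw [Set.disjoint_iff_inter_eq_empty.mp hd.symm, hd.symm.sdiff_eq_left,
      measure_empty, zero_add, om_cyl T hinf hfin hbr hμ0]
  · obtain ⟨P, hPa, hPb⟩ := Set.not_disjoint_iff.mp hd
    by_cases hsub : Cyl T b ⊆ Cyl T a
    · rw [Set.inter_eq_left.mpr hsub, Set.diff_eq_empty.mpr hsub, measure_empty,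
        add_zero, om_cyl T hinf hfin hbr hμ0]
    · have hba : Relation.ReflTransGen T.step b a := by
        rcases mem_comparable T hPa hPb with h | h
        · exact absurd (cyl_mono T h) hsub
        · exact h
      set n : ℕ := depth T a with hn
      have hdb : depth T b ≤ n := depth_le T hba
      have hsub2 : Cyl T a ⊆ Cyl T b := cyl_mono T hba
      have hinter : Cyl T b ∩ Cyl T a = Cyl T a := Set.inter_eq_right.mpr hsub2
      set L : Finset V := levelFin T hfin n b with hL
      have haL : a ∈ L := (mem_levelFin T hfin).mpr ⟨hba, rfl⟩
      have hdiff : Cyl T b \ Cyl T a = ⋃ c ∈ L.erase a, Cyl T c := by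
        ext Q
        constructor
        · rintro ⟨hQb, hQa⟩
          obtain ⟨c, hcQ, hdc⟩ := exists_depth_mem T hinf Q.2 n
          have hbc : Relation.ReflTransGen T.step b c := by
            rcases mem_comparable T hQb hcQ with h | h
            · exact h
            · exact (eq_of_depth_le T h (hdc ▸ hdb)).symm ▸ ReflTransGen.refl
          have hca : c ≠ a := fun he => hQa (he ▸ hcQ)
          exact Set.mem_biUnion
            (Finset.mem_erase.mpr ⟨hca, (mem_levelFin T hfin).mpr ⟨hbc, hdc⟩⟩) hcQ
        · intro hQ
          simp only [Set.mem_iUnion, exists_prop] at hQ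
          obtain ⟨c, hc, hQc⟩ := hQ
          obtain ⟨hcne, hcL⟩ := Finset.mem_erase.mp hc
          obtain ⟨hbc, hdc⟩ := (mem_levelFin T hfin).mp hcL
          refine ⟨cyl_mono T hbc hQc, fun hQa => ?_⟩
          exact hcne (eq_of_comparable_depth T (mem_comparable T hQc hQa) (by rw [hdc]))
      calc om T μ (Cyl T b ∩ Cyl T a) + om T μ (Cyl T b \ Cyl T a)
          = ENNReal.ofReal (μ a) + om T μ (⋃ c ∈ L.erase a, Cyl T c) := by
            rw [hinter, om_cyl T hinf hfin hbr hμ0, hdiff]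
        _ ≤ ENNReal.ofReal (μ a) + ∑ c ∈ L.erase a, om T μ (Cyl T c) :=
            add_le_add_right (measure_biUnion_finset_le _ _) _
        _ = ENNReal.ofReal (μ a) + ∑ c ∈ L.erase a, ENNReal.ofReal (μ c) := by
            rw [Finset.sum_congr rfl fun c _ => om_cyl T hinf hfin hbr hμ0 c]
        _ = ∑ c ∈ L, ENNReal.ofReal (μ c) :=
            Finset.add_sum_erase L (fun c => ENNReal.ofReal (μ c)) haL
        _ = ENNReal.ofReal (∑ c ∈ L, μ c) :=
            (ENNReal.ofReal_sum_of_nonneg fun c _ => hμ0 c).symm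
        _ = ENNReal.ofReal (μ b) := by rw [← mass' T hinf hfin hbr hdb]

include hinf hfin in
lemma isCara (hbr : ∀ a : V, (∃ b, T.step a b) → μ a = ∑ b ∈ (hfin a).toFinset, μ b)
    (hμ0 : ∀ v, 0 ≤ μ v) (a : V) :
    MeasurableSet[(om T μ).caratheodory] (Cyl T a) := by
  refine (OuterMeasure.isCaratheodory_iff (om T μ)).mpr ((OuterMeasure.isCaratheodory_iff_le (om T μ)).mpr fun X => ?_)
  have key : ∀ t : Set (MaxPath T),
      om T μ (t ∩ Cyl T a) + om T μ (t \ Cyl T a) ≤ mfun T μ t := by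
    intro t
    by_cases hcyl : ∃ b, t = Cyl T b
    · obtain ⟨b, rfl⟩ := hcyl
      rw [mfun_cyl T hinf hfin hbr]
      exact core_split T hinf hfin hbr hμ0 a b
    · by_cases hemp : t = ∅
      · subst hemp
        simp [mfun_empty]
      · exact (mfun_top T hemp hcyl) ▸ le_top
  conv_rhs => rw [om, OuterMeasure.ofFunction_apply]
  refine le_iInf fun t => le_iInf fun hcov => ?_
  have h1 : om T μ (X ∩ Cyl T a) ≤ ∑' k, om T μ (t k ∩ Cyl T a) := by
    refine le_trans (measure_mono ?_) (measure_iUnion_le _)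
    rw [← Set.iUnion_inter]
    exact Set.inter_subset_inter_left _ hcov
  have h2 : om T μ (X \ Cyl T a) ≤ ∑' k, om T μ (t k \ Cyl T a) := by
    refine le_trans (measure_mono ?_) (measure_iUnion_le _)
    rw [← Set.iUnion_diff]
    exact Set.diff_subset_diff_left hcov
  calc om T μ (X ∩ Cyl T a) + om T μ (X \ Cyl T a)
      ≤ (∑' k, om T μ (t k ∩ Cyl T a)) + ∑' k, om T μ (t k \ Cyl T a) :=
        add_le_add h1 h2
    _ = ∑' k, (om T μ (t k ∩ Cyl T a) + om T μ (t k \ Cyl T a)) :=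
        (ENNReal.tsum_add).symm
    _ ≤ ∑' k, mfun T μ (t k) := ENNReal.tsum_le_tsum fun k => key (t k)

end QTreeAux

open MeasureTheory ENNReal

/-- the cylinder-set function ν(ω(A/a)) = μ(a) induced by a
branching-consistent vertex weight μ is well-defined, additive and
σ-subadditive on the semiring of cylinder sets, assigns 1 to ω(A), and hence
extends uniquely to a probability measure on the generated σ-algebra. -/
theorem stmt_17 [Countable V] (T : QTree V)
    (hfin : ∀ a : V, {b : V | T.step a b}.Finite)
    (hinf : ∀ P : Set V, IsMaxPath T P → P.Infinite)
    (μ : V → ℝ) (hμ01 : ∀ a, 0 ≤ μ a ∧ μ a ≤ 1) (hroot : μ T.root = 1)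
    (hbr : ∀ a : V, (∃ b, T.step a b) → μ a = ∑ b ∈ (hfin a).toFinset, μ b) :
    let 𝒮 : Set (Set (MaxPath T)) :=
      {S | ∃ a : V, S = {P : MaxPath T | a ∈ P.1}} ∪ {∅}
    -- ν is well-defined: equal cylinder sets get equal values
    (∀ a b : V, {P : MaxPath T | a ∈ P.1} = {P : MaxPath T | b ∈ P.1} → μ a = μ b) ∧
    -- ν is additive on 𝒮
    (∀ (a : V) (K : ℕ) (f : Fin K → V),
      Pairwise (Function.onFun Disjoint (fun i => {P : MaxPath T | f i ∈ P.1})) →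
      ({P : MaxPath T | a ∈ P.1} = ⋃ i, {P : MaxPath T | f i ∈ P.1}) →
      μ a = ∑ i, μ (f i)) ∧
    -- ν is σ-subadditive on 𝒮
    (∀ (a : V) (f : ℕ → V),
      ({P : MaxPath T | a ∈ P.1} ⊆ ⋃ k, {P : MaxPath T | f k ∈ P.1}) →
      ENNReal.ofReal (μ a) ≤ ∑' k, ENNReal.ofReal (μ (f k))) ∧
    -- ν(ω(A)) = 1
    ({P : MaxPath T | T.root ∈ P.1} = Set.univ) ∧
    -- unique extension to a probability measure on σ(𝒮)
    (∃! ν : @Measure (MaxPath T) (MeasurableSpace.generateFrom 𝒮),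
      IsProbabilityMeasure ν ∧
        ∀ a : V, ν {P : MaxPath T | a ∈ P.1} = ENNReal.ofReal (μ a)) := by
  intro 𝒮
  classical
  have hμ0 : ∀ v, 0 ≤ μ v := fun v => (hμ01 v).1
  have hroot_univ : QTreeAux.Cyl T T.root = Set.univ :=
    Set.eq_univ_of_forall fun P => P.2.1.1
  refine ⟨?_, ?_, ?_, ?_, ?_⟩
  · intro a b h
    exact QTreeAux.mu_eq_of_cyl_eq T hinf hfin hbr h
  · intro a K f hdisj heq
    exact QTreeAux.additive T hinf hfin hbr hdisj heq
  · intro a f hcov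
    have h1 := QTreeAux.master T hinf hfin hbr hμ0
      (fun k => QTreeAux.Cyl T (f k)) (fun k => Or.inr ⟨f k, rfl⟩) hcov
    calc ENNReal.ofReal (μ a) ≤ ∑' k, QTreeAux.mfun T μ (QTreeAux.Cyl T (f k)) := h1
      _ = ∑' k, ENNReal.ofReal (μ (f k)) :=
          tsum_congr fun k => QTreeAux.mfun_cyl T hinf hfin hbr (f k)
  · exact hroot_univ
  · letI msp : MeasurableSpace (MaxPath T) := MeasurableSpace.generateFrom 𝒮
    have hle : msp ≤ (QTreeAux.om T μ).caratheodory := by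
      refine MeasurableSpace.generateFrom_le ?_
      rintro s (⟨a, rfl⟩ | hs)
      · exact QTreeAux.isCara T hinf hfin hbr hμ0 a
      · have hs' : s = ∅ := hs
        exact hs' ▸ @MeasurableSet.empty _ ((QTreeAux.om T μ).caratheodory)
    set ν : Measure (MaxPath T) := (QTreeAux.om T μ).toMeasure hle with hν
    have hmeas : ∀ a : V, MeasurableSet[msp] (QTreeAux.Cyl T a) :=
      fun a => MeasurableSpace.measurableSet_generateFrom (Or.inl ⟨a, rfl⟩)
    have hν_cyl : ∀ a : V, ν (QTreeAux.Cyl T a) = ENNReal.ofReal (μ a) := by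
      intro a
      rw [hν, toMeasure_apply _ _ (hmeas a)]
      exact QTreeAux.om_cyl T hinf hfin hbr hμ0 a
    have hprob : IsProbabilityMeasure ν :=
      ⟨by rw [← hroot_univ, hν_cyl, hroot, ENNReal.ofReal_one]⟩
    have hpi : IsPiSystem 𝒮 := by
      rintro s (⟨a, rfl⟩ | hs) t (⟨b, rfl⟩ | ht) hne
      · obtain ⟨P, hPa, hPb⟩ := hne
        rcases QTreeAux.mem_comparable T hPa hPb with h | h
        · exact Or.inl ⟨b, Set.inter_eq_right.mpr (QTreeAux.cyl_mono T h)⟩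
        · exact Or.inl ⟨a, Set.inter_eq_left.mpr (QTreeAux.cyl_mono T h)⟩
      · have ht' : t = ∅ := ht
        exact Or.inr (by simp [ht'])
      · have hs' : s = ∅ := hs
        exact Or.inr (by simp [hs'])
      · have hs' : s = ∅ := hs
        exact Or.inr (by simp [hs'])
    refine ⟨ν, ⟨hprob, fun a => hν_cyl a⟩, ?_⟩
    rintro ν' ⟨hprob', heval'⟩
    haveI := hprob'
    refine MeasureTheory.ext_of_generate_finite 𝒮 rfl hpi ?_ ?_
    · rintro s (⟨a, rfl⟩ | hs)
      · exact (heval' a).trans (hν_cyl a).symm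
      · have hs' : s = ∅ := hs
        rw [hs']
        simp
    · rw [hprob'.measure_univ, hprob.measure_univ]
end
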